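/- Let n ≥ 2 and α ≠ α' ∈ Pair[n]. There exists c = c(n,Φ) ∈ (0,∞) such that for every ε ∈ (0,1], every t > 0, and all g ∈ L²(Y^ε_α), f ∈ L²(Y^ε_{α'}): ∫_{Y^ε_α} ∫_{Y^ε_{α'}} |g(y)| φ(y_r) G(t, S^ε_α y − S^ε_{α'} y') φ(y'_r) |f(y')| dy' dy ≤ c t^{−1} ‖g‖_{L²} ‖f‖_{L²}. Equivalently, the integral operator P^ε_{αα'}(t) with kernel φ(y_r) G(t, S^ε_α y − S^ε_{α'} y') φ(y'_r) has L² → L² operator norm at most c t^{−1}, uniformly in ε ∈ (0,1]. -/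

import Mathlib

open MeasureTheory Real Filter
open scoped ENNReal NNReal BigOperators

noncomputable section

/-- ℝ² realized as ℝ × ℝ. -/
abbrev R2 : Type := ℝ × ℝ

/-- ℓ¹ norm on ℝ². -/
def nrm1 (x : R2) : ℝ := |x.1| + |x.2|

/-- square of the Euclidean norm on ℝ². -/
def nrmsq (x : R2) : ℝ := x.1 ^ 2 + x.2 ^ 2

/-- heat kernel on ℝ². -/
def hk (t : ℝ) (x : R2) : ℝ := (2 * π * t)⁻¹ * Real.exp (-nrmsq x / (2 * t))

/-- heat kernel on (ℝ²)ⁿ. -/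
def G (n : ℕ) (t : ℝ) (x : Fin n → R2) : ℝ := ∏ i, hk t (x i)

/-- ℓ¹ norm on (ℝ²)ⁿ. -/
def nrm1n {n : ℕ} (x : Fin n → R2) : ℝ := ∑ i, nrm1 (x i)

/-- unordered pairs α = {i < j} in {1,…,n}. -/
abbrev Pair (n : ℕ) : Type := {p : Fin n × Fin n // p.1 < p.2}

/-- the indices not in α. -/
abbrev outIdx {n : ℕ} (α : Pair n) : Type := {k : Fin n // k ≠ α.1.1 ∧ k ≠ α.1.2}

/-- Y_α = ℝ² × (ℝ²)^{[n]∖α} with first coordinate the center of mass. -/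
abbrev Ysp {n : ℕ} (α : Pair n) : Type := R2 × (outIdx α → R2)

/-- Y^ε_α = ℝ² × ℝ² × (ℝ²)^{[n]∖α}, coordinates (y_r, y_c, (y_k)). -/
abbrev Yesp {n : ℕ} (α : Pair n) : Type := R2 × R2 × (outIdx α → R2)

/-- S_α : Y_α → (ℝ²)ⁿ. -/
def Sa {n : ℕ} (α : Pair n) (y : Ysp α) : Fin n → R2 :=
  fun k => if h : k ≠ α.1.1 ∧ k ≠ α.1.2 then y.2 ⟨k, h⟩ else y.1

/-- S^ε_α : Y^ε_α → (ℝ²)ⁿ. -/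
def Sea {n : ℕ} (α : Pair n) (ε : ℝ) (y : Yesp α) : Fin n → R2 :=
  fun k => if h : k ≠ α.1.1 ∧ k ≠ α.1.2 then y.2.2 ⟨k, h⟩
    else if k = α.1.1 then y.2.1 + (ε / 2) • y.1 else y.2.1 - (ε / 2) • y.1

/-- j(t) = ∫_0^∞ t^{u-1} e^{θu} / Γ(u) du. -/
def jfun (θ t : ℝ) : ℝ := ∫ u in Set.Ioi (0 : ℝ), t ^ (u - 1) * Real.exp (θ * u) / Real.Gamma u

/-- J_α(t,u,v). -/
def Jker (θ : ℝ) {n : ℕ} (α : Pair n) (t : ℝ) (u v : Ysp α) : ℝ :=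
  4 * π * jfun θ t * hk (t / 2) (u.1 - v.1) * ∏ k, hk t (u.2 k - v.2 k)

/-- iterated integral over τ_1,…,τ_k > 0 with τ_1 + ⋯ + τ_k = t (the last variable being
determined by the others). -/
def simpInt : (k : ℕ) → ℝ → ((Fin k → ℝ) → ℝ≥0∞) → ℝ≥0∞
  | 0, t, f => if t = 0 then f (fun i => i.elim0) else 0
  | 1, t, f => if 0 < t then f (fun _ => t) else 0
  | (k + 2), t, f => ∫⁻ τ in Set.Ioo 0 t, simpInt (k + 1) (t - τ) (fun v => f (Fin.cons τ v))

/-- simplex integral over positive time variables indexed by a finite type, with total sum t. -/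
def simpIntF (ι : Type*) [Fintype ι] (t : ℝ) (f : (ι → ℝ) → ℝ≥0∞) : ℝ≥0∞ :=
  simpInt (Fintype.card ι) t (fun τ => f (fun i => τ (Fintype.equivFin ι i)))

/-- Dgm[n]: finite sequences of pairs with consecutive entries distinct. -/
abbrev Dgm (n : ℕ) : Type :=
  {d : Σ m : ℕ, Fin (m + 1) → Pair n // ∀ k : Fin d.1, d.2 k.castSucc ≠ d.2 k.succ}

/-- K^{α⃗}_t(x,x'), the diagram kernel for α⃗ = (α_0,…,α_m). -/
def Kdgm (θ : ℝ) {n : ℕ} (m : ℕ) (α : Fin (m + 1) → Pair n) (t : ℝ)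
    (x x' : Fin n → R2) : ℝ≥0∞ :=
  simpIntF (Fin (m + 2) ⊕ Fin (m + 1)) t fun τ =>
    ∫⁻ u : ∀ k, Ysp (α k), ∫⁻ v : ∀ k, Ysp (α k),
      ENNReal.ofReal (G n (τ (Sum.inl 0)) (Sa (α 0) (u 0) - x))
      * (∏ k, ENNReal.ofReal (Jker θ (α k) (τ (Sum.inr k)) (u k) (v k)))
      * (∏ k : Fin m, ENNReal.ofReal (G n (τ (Sum.inl k.succ.castSucc))
          (Sa (α k.castSucc) (v k.castSucc) - Sa (α k.succ) (u k.succ))))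
      * ENNReal.ofReal
          (G n (τ (Sum.inl (Fin.last (m + 1)))) (Sa (α (Fin.last m)) (v (Fin.last m)) - x'))

/-- the limiting delta-Bose kernel K_t(x,x'). -/
def Klim (θ : ℝ) (n : ℕ) (t : ℝ) (x x' : Fin n → R2) : ℝ≥0∞ :=
  ENNReal.ofReal (G n t (x - x')) + ∑' d : Dgm n, Kdgm θ d.1.1 d.1.2 t x x'

/-- standing assumptions on the mollifier Φ. -/
def PhiOK (Φ : R2 → ℝ) : Prop :=
  ContDiff ℝ (⊤ : ℕ∞) Φ ∧ HasCompactSupport Φ ∧ (∀ x, 0 ≤ Φ x) ∧ (∫ x : R2, Φ x) = 1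

/-- the coupling constant β_ε. -/
def betaEps (θ : ℝ) (Φ : R2 → ℝ) (ε : ℝ) : ℝ :=
  2 * π / |Real.log ε| +
    π / (Real.log ε) ^ 2 *
      (θ - 2 * Real.log 2 + 2 * Real.eulerMascheroniConstant +
        2 * ∫ x : R2, ∫ x' : R2, Φ x * Real.log (Real.sqrt (nrmsq (x - x'))) * Φ x')

/-- the chain kernel: k interior nodes, k+1 heat-kernel links at scale ε. -/
def chain (ε : ℝ) (Φ : R2 → ℝ) : (k : ℕ) → (Fin (k + 1) → ℝ) → R2 → R2 → ℝ≥0∞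
  | 0, τ, z, z' => ENNReal.ofReal (hk (2 * τ 0) (ε • (z - z')))
  | (k + 1), τ, z, z' => ∫⁻ w : R2,
      ENNReal.ofReal (hk (2 * τ 0) (ε • (z - w)) * Φ w) * chain ε Φ k (fun i => τ i.succ) w z'

/-- j^ε(t,z,z'). -/
def jEps (θ : ℝ) (Φ : R2 → ℝ) (ε t : ℝ) (z z' : R2) : ℝ≥0∞ :=
  ∑' k : ℕ, ENNReal.ofReal (betaEps θ Φ ε ^ (k + 2)) *
    simpInt (k + 1) t (fun τ =>
      ENNReal.ofReal (Real.sqrt (Φ z)) * chain ε Φ k τ z z' * ENNReal.ofReal (Real.sqrt (Φ z')))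

/-- J^ε_α(t,u,v). -/
def Jeps (θ : ℝ) (Φ : R2 → ℝ) {n : ℕ} (α : Pair n) (ε t : ℝ) (u v : Yesp α) : ℝ≥0∞ :=
  jEps θ Φ ε t u.1 v.1 * ENNReal.ofReal (hk (t / 2) (u.2.1 - v.2.1)) *
    ∏ k, ENNReal.ofReal (hk t (u.2.2 k - v.2.2 k))

/-- K^{ε,α⃗}_t(x,x'), the mollified diagram kernel, with the sum over S ⊆ {0,…,m}. -/
def KepsDgm (θ : ℝ) (Φ : R2 → ℝ) (ε : ℝ) {n : ℕ} (m : ℕ) (α : Fin (m + 1) → Pair n)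
    (t : ℝ) (x x' : Fin n → R2) : ℝ≥0∞ :=
  ∑ S : Finset (Fin (m + 1)),
    ENNReal.ofReal (betaEps θ Φ ε ^ S.card) *
      simpIntF (Fin (m + 2) ⊕ {k : Fin (m + 1) // k ∉ S}) t fun τ =>
        ∫⁻ u : ∀ k, Yesp (α k), ∫⁻ v : ∀ k : {k : Fin (m + 1) // k ∉ S}, Yesp (α k.1),
          (fun w : ∀ k, Yesp (α k) =>
            ENNReal.ofReal (Real.sqrt (Φ (u 0).1)) *
            ENNReal.ofReal (G n (τ (Sum.inl 0)) (Sea (α 0) ε (u 0) - x)) *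
            (∏ k : {k : Fin (m + 1) // k ∉ S},
              Jeps θ Φ (α k.1) ε (τ (Sum.inr k)) (u k.1) (v k)) *
            (∏ k : Fin m, ENNReal.ofReal (Real.sqrt (Φ (w k.castSucc).1) *
              G n (τ (Sum.inl k.succ.castSucc))
                (Sea (α k.castSucc) ε (w k.castSucc) - Sea (α k.succ) ε (u k.succ)) *
              Real.sqrt (Φ (u k.succ).1))) *
            ENNReal.ofReal (Real.sqrt (Φ (w (Fin.last m)).1) *
              G n (τ (Sum.inl (Fin.last (m + 1)))) (Sea (α (Fin.last m)) ε (w (Fin.last m)) - x')))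
          (fun k => if h : k ∈ S then u k else v ⟨k, h⟩)

/-- the mollified delta-Bose kernel K^ε_t(x,x'). -/
def Keps (θ : ℝ) (Φ : R2 → ℝ) (ε : ℝ) (n : ℕ) (t : ℝ) (x x' : Fin n → R2) : ℝ≥0∞ :=
  ENNReal.ofReal (G n t (x - x')) + ∑' d : Dgm n, KepsDgm θ Φ ε d.1.1 d.1.2 t x x'

/-- the pairing 𝒥^ε(t; g, f). -/
def Jpairing (θ : ℝ) (Φ : R2 → ℝ) (ε t : ℝ) (g f : R2 → ℝ≥0∞) : ℝ≥0∞ :=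
  ∑' k : ℕ, ENNReal.ofReal (betaEps θ Φ ε ^ (k + 2)) *
    simpInt (k + 1) t (fun τ => ∫⁻ z : R2, ∫⁻ z' : R2,
      g z * ENNReal.ofReal (Real.sqrt (Φ z)) * chain ε Φ k τ z z' *
        ENNReal.ofReal (Real.sqrt (Φ z')) * f z')

/-- the scalar majorant B_ε(t). -/
def Bfun (β c0 ε t : ℝ) : ℝ≥0∞ :=
  ENNReal.ofReal β * ∑' k : ℕ, simpInt (k + 1) t
    (fun τ => ∏ i, ENNReal.ofReal (β / (4 * π) * ((τ i) ^ 2 + c0 * ε ^ 2 * (τ i)) ^ (-(1/2) : ℝ)))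

end
noncomputable section
open MeasureTheory Real Filter Fintype
open scoped ENNReal NNReal BigOperators

variable {t : ℝ}

lemma hk_nonneg (ht : 0 < t) (x : R2) : 0 ≤ hk t x := by
  have : (0:ℝ) < 2 * π * t := by positivity
  exact mul_nonneg (inv_nonneg.2 this.le) (Real.exp_nonneg _)

lemma hk_le (ht : 0 < t) (x : R2) : hk t x ≤ (2 * π * t)⁻¹ := by
  have h1 : Real.exp (-nrmsq x / (2 * t)) ≤ 1 := by
    apply Real.exp_le_one_iff.2
    have : 0 ≤ nrmsq x := by unfold nrmsq; positivity
    exact div_nonpos_of_nonpos_of_nonneg (by linarith) (by positivity)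
  calc hk t x ≤ (2 * π * t)⁻¹ * 1 := by
        apply mul_le_mul_of_nonneg_left h1; positivity
    _ = _ := mul_one _

lemma hk_neg (t : ℝ) (x : R2) : hk t (-x) = hk t x := by
  simp [hk, nrmsq]

lemma continuous_hk (ht : 0 < t) : Continuous (hk t) := by
  unfold hk nrmsq
  fun_prop

lemma G_nonneg {n : ℕ} (ht : 0 < t) (x : Fin n → R2) : 0 ≤ G n t x :=
  Finset.prod_nonneg fun i _ => hk_nonneg ht _

lemma G_neg {n : ℕ} (x : Fin n → R2) : G n t (-x) = G n t x := by
  unfold G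
  exact Finset.prod_congr rfl fun i _ => by rw [Pi.neg_apply, hk_neg]

lemma continuous_G {n : ℕ} (ht : 0 < t) : Continuous (G n t) :=
  continuous_finset_prod _ fun i _ => (continuous_hk ht).comp (continuous_apply i)

lemma lintegral_hk (ht : 0 < t) : ∫⁻ x : R2, ENNReal.ofReal (hk t x) = 1 := by
  have h2t : (0:ℝ) < (2*t)⁻¹ := by positivity
  set e1 : ℝ → ℝ := fun a => Real.exp (-(2*t)⁻¹ * a^2) with he1
  have key : ∀ x : R2, hk t x = (2*π*t)⁻¹ * (e1 x.1 * e1 x.2) := by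
    intro x
    rw [he1]
    simp only [hk, nrmsq, ← Real.exp_add]
    congr 1
    ring
  have hmeas : Measurable e1 := by fun_prop
  have h1d : ∫⁻ a : ℝ, ENNReal.ofReal (e1 a) = ENNReal.ofReal (Real.sqrt (π / (2*t)⁻¹)) := by
    rw [← ofReal_integral_eq_lintegral_ofReal (integrable_exp_neg_mul_sq h2t)
      (Filter.Eventually.of_forall fun a => Real.exp_nonneg _)]
    rw [integral_gaussian]
  calc ∫⁻ x : R2, ENNReal.ofReal (hk t x)
      = ∫⁻ x : R2, ENNReal.ofReal ((2*π*t)⁻¹) *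
          (ENNReal.ofReal (e1 x.1) * ENNReal.ofReal (e1 x.2)) := by
        congr 1; ext x
        rw [key x, ENNReal.ofReal_mul (by positivity), ENNReal.ofReal_mul (Real.exp_nonneg _)]
    _ = ENNReal.ofReal ((2*π*t)⁻¹) *
          ∫⁻ x : R2, (ENNReal.ofReal (e1 x.1) * ENNReal.ofReal (e1 x.2)) := by
        rw [lintegral_const_mul]
        exact ((hmeas.comp measurable_fst).ennreal_ofReal).mul
          ((hmeas.comp measurable_snd).ennreal_ofReal)
    _ = ENNReal.ofReal ((2*π*t)⁻¹) *
          ((∫⁻ a : ℝ, ENNReal.ofReal (e1 a)) * ∫⁻ a : ℝ, ENNReal.ofReal (e1 a)) := by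
        rw [Measure.volume_eq_prod, lintegral_prod_mul hmeas.ennreal_ofReal.aemeasurable
          hmeas.ennreal_ofReal.aemeasurable]
    _ = 1 := by
        rw [h1d, ← ENNReal.ofReal_mul (by positivity), ← ENNReal.ofReal_mul (by positivity)]
        rw [Real.mul_self_sqrt (by positivity)]
        rw [show (2*π*t)⁻¹ * (π / (2*t)⁻¹) = 1 by field_simp]
        exact ENNReal.ofReal_one

lemma lintegral_hk_sub (ht : 0 < t) (v : R2) :
    ∫⁻ c : R2, ENNReal.ofReal (hk t (v - c)) = 1 := by
  have : ∀ c : R2, hk t (v - c) = hk t (c - v) := by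
    intro c; rw [← hk_neg t (c - v)]; congr 1; abel
  simp_rw [this]
  rw [lintegral_sub_right_eq_self (fun c => ENNReal.ofReal (hk t c)) v]
  exact lintegral_hk ht

theorem lintegral_fin_prod {n : ℕ} {E : Type*} [MeasureSpace E]
    [SigmaFinite (volume : Measure E)] (f : Fin n → E → ℝ≥0∞) (hf : ∀ i, Measurable (f i)) :
    ∫⁻ x : Fin n → E, ∏ i, f i (x i) = ∏ i, ∫⁻ x, f i x := by
  induction n with
  | zero => simp [volume_pi, lintegral_const, Measure.pi_empty_univ]
  | succ n ih =>
    have hmeas : Measurable fun x : (Fin (n+1) → E) => ∏ i, f i (x i) :=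
      Finset.measurable_prod _ fun i _ => (hf i).comp (measurable_pi_apply i)
    have hmp := (measurePreserving_piFinSuccAbove (fun _ : Fin (n+1) => (volume : Measure E)) 0).symm
    have key := hmp.lintegral_comp hmeas
    simp_rw [MeasurableEquiv.piFinSuccAbove_symm_apply, Fin.insertNthEquiv,
      Fin.prod_univ_succ, Fin.insertNth_zero, Equiv.coe_fn_mk, cast_eq,
      Fin.cons_zero, Fin.cons_succ] at key
    simp_rw [Fin.prod_univ_succ]
    rw [volume_pi, ← key]
    rw [lintegral_prod_mul (f := f 0) (g := fun w : Fin n → E => ∏ i, f i.succ (w i))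
      (hf 0).aemeasurable
      (Finset.measurable_prod _ fun i _ => (hf i.succ).comp (measurable_pi_apply i)).aemeasurable]
    rw [← volume_pi, ih (fun i => f i.succ) (fun i => hf i.succ)]

theorem lintegral_fintype_prod {ι : Type*} [Fintype ι] {E : Type*} [MeasureSpace E]
    [SigmaFinite (volume : Measure E)] (f : ι → E → ℝ≥0∞) (hf : ∀ i, Measurable (f i)) :
    ∫⁻ x : ι → E, ∏ i, f i (x i) = ∏ i, ∫⁻ x, f i x := by
  let e := (equivFin ι).symm
  have hmeas2 : Measurable fun x : ι → E => ∏ i, f i (x i) :=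
    Finset.measurable_prod _ fun i _ => (hf i).comp (measurable_pi_apply i)
  have key := (volume_measurePreserving_piCongrLeft (fun _ : ι => E) e).lintegral_comp hmeas2
  have rewr : ∀ a : Fin (card ι) → E,
      (∏ i : ι, f i ((MeasurableEquiv.piCongrLeft (fun _ => E) e) a i)) =
        ∏ j, f (e j) (a j) := by
    intro a
    rw [← e.prod_comp fun i => f i ((MeasurableEquiv.piCongrLeft (fun _ => E) e) a i)]
    exact Finset.prod_congr rfl fun j _ => by
      rw [MeasurableEquiv.coe_piCongrLeft, Equiv.piCongrLeft_apply_apply]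
  simp_rw [rewr] at key
  rw [← key, lintegral_fin_prod (fun j => f (e j)) (fun j => hf (e j)),
    e.prod_comp fun i => ∫⁻ x, f i x]

lemma measurable_Sea_apply {n : ℕ} (β : Pair n) (ε : ℝ) (i : Fin n) :
    Measurable fun y : Yesp β => Sea β ε y i := by
  unfold Sea
  by_cases h : i ≠ β.1.1 ∧ i ≠ β.1.2
  · simp only [dif_pos h]
    exact (measurable_pi_apply _).comp (measurable_snd.comp measurable_snd)
  · simp only [dif_neg h]
    by_cases h2 : i = β.1.1
    · simp only [if_pos h2]
      fun_prop
    · simp only [if_neg h2]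
      fun_prop

end
noncomputable section
open MeasureTheory Real Filter Fintype
open scoped ENNReal NNReal BigOperators

lemma Sea_apply_out {n : ℕ} (β : Pair n) (ε : ℝ) (y : Yesp β) (k : outIdx β) :
    Sea β ε y k.1 = y.2.2 k := by
  unfold Sea; rw [dif_pos k.2]

lemma Sea_apply_fst {n : ℕ} (β : Pair n) (ε : ℝ) (y : Yesp β) :
    Sea β ε y β.1.1 = y.2.1 + (ε/2) • y.1 := by
  unfold Sea; rw [dif_neg (by simp), if_pos rfl]

lemma Sea_apply_snd {n : ℕ} (β : Pair n) (ε : ℝ) (y : Yesp β) :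
    Sea β ε y β.1.2 = y.2.1 - (ε/2) • y.1 := by
  have hab : β.1.1 ≠ β.1.2 := ne_of_lt β.2
  unfold Sea; rw [dif_neg (by simp), if_neg hab.symm]

lemma G_factor {n : ℕ} (β : Pair n) (ε t : ℝ) (X : Fin n → R2) (y : Yesp β) :
    G n t (X - Sea β ε y) = hk t (X β.1.1 - (y.2.1 + (ε/2) • y.1)) *
      (hk t (X β.1.2 - (y.2.1 - (ε/2) • y.1)) * ∏ k : outIdx β, hk t (X k.1 - y.2.2 k)) := by
  have hab : β.1.1 ≠ β.1.2 := ne_of_lt β.2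
  unfold G
  rw [← Finset.mul_prod_erase Finset.univ _ (Finset.mem_univ β.1.1),
    ← Finset.mul_prod_erase (Finset.univ.erase β.1.1) _
      (Finset.mem_erase.2 ⟨hab.symm, Finset.mem_univ _⟩)]
  congr 1
  · rw [Pi.sub_apply, Sea_apply_fst]
  congr 1
  · rw [Pi.sub_apply, Sea_apply_snd]
  · rw [Finset.prod_subtype ((Finset.univ.erase β.1.1).erase β.1.2)
      (p := fun k => k ≠ β.1.1 ∧ k ≠ β.1.2)
      (by intro x; simp only [Finset.mem_erase, Finset.mem_univ, and_true]; tauto)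
      (fun i => hk t ((X - Sea β ε y) i))]
    exact Finset.prod_congr rfl fun k _ => by rw [Pi.sub_apply, Sea_apply_out]
end
noncomputable section
open MeasureTheory Real Filter Fintype
open scoped ENNReal NNReal BigOperators

lemma core_bound {n : ℕ} {Φ : R2 → ℝ} (hΦm : Measurable fun r : R2 => Real.sqrt (Φ r))
    {C : ℝ} (hC : ∫⁻ r : R2, ENNReal.ofReal (Real.sqrt (Φ r)) = ENNReal.ofReal C) (hC0 : 0 ≤ C)
    (β : Pair n) (ε : ℝ) {t : ℝ} (ht : 0 < t) (X : Fin n → R2) :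
    ∫⁻ y : Yesp β, ENNReal.ofReal (Real.sqrt (Φ y.1)) * ENNReal.ofReal (G n t (X - Sea β ε y))
      ≤ ENNReal.ofReal ((2*π*t)⁻¹ * C) := by
  have harg : ∀ u v w : R2, u - (v - w) = (u + w) - v := fun u v w => by abel
  set H : Yesp β → ℝ≥0∞ := fun y =>
    (ENNReal.ofReal (Real.sqrt (Φ y.1)) * ENNReal.ofReal ((2*π*t)⁻¹)) *
    (ENNReal.ofReal (hk t ((X β.1.2 + (ε/2) • y.1) - y.2.1)) *
      ∏ k : outIdx β, ENNReal.ofReal (hk t (X k.1 - y.2.2 k))) with hH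
  -- measurability pieces
  have mh1 : ∀ r : R2, Measurable fun c : R2 =>
      ENNReal.ofReal (hk t ((X β.1.2 + (ε/2) • r) - c)) := fun r =>
    ((continuous_hk ht).measurable.comp (measurable_const.sub measurable_id)).ennreal_ofReal
  have mPk : ∀ k : outIdx β, Measurable fun z : R2 => ENNReal.ofReal (hk t (X k.1 - z)) :=
    fun k => ((continuous_hk ht).measurable.comp
      (measurable_const.sub measurable_id)).ennreal_ofReal
  have mP : Measurable fun w : outIdx β → R2 =>
      ∏ k : outIdx β, ENNReal.ofReal (hk t (X k.1 - w k)) :=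
    Finset.measurable_prod _ fun k _ => (mPk k).comp (measurable_pi_apply k)
  have mH : Measurable H := by
    apply Measurable.mul
    · exact ((hΦm.comp measurable_fst).ennreal_ofReal).mul measurable_const
    · apply Measurable.mul
      · apply Measurable.ennreal_ofReal
        apply (continuous_hk ht).measurable.comp
        have : Measurable fun y : Yesp β => (X β.1.2 + (ε/2) • y.1) - y.2.1 := by fun_prop
        exact this
      · exact mP.comp (measurable_snd.comp measurable_snd)
  -- pointwise bound
  have step1 : ∀ y : Yesp β,
      ENNReal.ofReal (Real.sqrt (Φ y.1)) * ENNReal.ofReal (G n t (X - Sea β ε y)) ≤ H y := by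
    intro y
    rw [hH]
    rw [G_factor β ε t X y, ENNReal.ofReal_mul (hk_nonneg ht _),
      ENNReal.ofReal_mul (hk_nonneg ht _),
      ENNReal.ofReal_prod_of_nonneg (fun k _ => hk_nonneg ht _)]
    rw [harg (X β.1.2) y.2.1 ((ε/2) • y.1)]
    calc ENNReal.ofReal (Real.sqrt (Φ y.1)) *
          (ENNReal.ofReal (hk t (X β.1.1 - (y.2.1 + (ε/2) • y.1))) *
          (ENNReal.ofReal (hk t ((X β.1.2 + (ε/2) • y.1) - y.2.1)) *
            ∏ k : outIdx β, ENNReal.ofReal (hk t (X k.1 - y.2.2 k))))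
        = (ENNReal.ofReal (Real.sqrt (Φ y.1)) *
            ENNReal.ofReal (hk t (X β.1.1 - (y.2.1 + (ε/2) • y.1)))) *
          (ENNReal.ofReal (hk t ((X β.1.2 + (ε/2) • y.1) - y.2.1)) *
            ∏ k : outIdx β, ENNReal.ofReal (hk t (X k.1 - y.2.2 k))) := by ring
      _ ≤ _ :=
          mul_le_mul_left (mul_le_mul_right
            (ENNReal.ofReal_le_ofReal (hk_le ht _)) _) _
  refine le_trans (lintegral_mono step1) (le_of_eq ?_)
  -- compute ∫⁻ H
  have hint : ∀ r : R2, (∫⁻ q : R2 × (outIdx β → R2),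
      ENNReal.ofReal (hk t ((X β.1.2 + (ε/2) • r) - q.1)) *
        ∏ k : outIdx β, ENNReal.ofReal (hk t (X k.1 - q.2 k))) = 1 := by
    intro r
    rw [Measure.volume_eq_prod, lintegral_prod_mul (mh1 r).aemeasurable mP.aemeasurable]
    rw [lintegral_hk_sub ht, lintegral_fintype_prod _ mPk, one_mul]
    exact Finset.prod_eq_one fun k _ => lintegral_hk_sub ht (X k.1)
  calc ∫⁻ y : Yesp β, H y
      = ∫⁻ r : R2, ∫⁻ q : R2 × (outIdx β → R2), H (r, q) := by
        rw [Measure.volume_eq_prod, lintegral_prod _ mH.aemeasurable]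
    _ = ∫⁻ r : R2, (ENNReal.ofReal (Real.sqrt (Φ r)) * ENNReal.ofReal ((2*π*t)⁻¹)) * 1 := by
        apply lintegral_congr
        intro r
        have minner : Measurable fun q : R2 × (outIdx β → R2) =>
            ENNReal.ofReal (hk t ((X β.1.2 + (ε/2) • r) - q.1)) *
              ∏ k : outIdx β, ENNReal.ofReal (hk t (X k.1 - q.2 k)) :=
          ((mh1 r).comp measurable_fst).mul (mP.comp measurable_snd)
        rw [hH]
        simp only
        rw [lintegral_const_mul _ minner, hint r]
    _ = ENNReal.ofReal ((2*π*t)⁻¹ * C) := by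
        simp_rw [mul_one]
        rw [lintegral_mul_const _ hΦm.ennreal_ofReal, hC,
          ← ENNReal.ofReal_mul hC0, mul_comm C]
end
noncomputable section
open MeasureTheory Real Filter
open scoped ENNReal NNReal BigOperators

set_option maxHeartbeats 2000000 in
theorem stmt7 (n : ℕ) (hn : 2 ≤ n) (α α' : Pair n) (hne : α ≠ α')
    (Φ : R2 → ℝ) (hΦ : PhiOK Φ) :
    ∃ c : ℝ, 0 < c ∧ ∀ ε : ℝ, 0 < ε → ε ≤ 1 → ∀ t : ℝ, 0 < t →
      ∀ (g : Yesp α → ℝ≥0∞) (f : Yesp α' → ℝ≥0∞), Measurable g → Measurable f →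
        (∫⁻ y, ∫⁻ y', g y * ENNReal.ofReal
            (Real.sqrt (Φ y.1) * G n t (Sea α ε y - Sea α' ε y') * Real.sqrt (Φ y'.1)) * f y') ≤
          ENNReal.ofReal (c / t) *
            (∫⁻ y, (g y) ^ 2) ^ (1/2 : ℝ) * (∫⁻ y', (f y') ^ 2) ^ (1/2 : ℝ) := by
  obtain ⟨hΦc, hΦs, hΦ0, -⟩ := hΦ
  have hcont : Continuous fun r : R2 => Real.sqrt (Φ r) :=
    Real.continuous_sqrt.comp hΦc.continuous
  have hΦm : Measurable fun r : R2 => Real.sqrt (Φ r) := hcont.measurable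
  have hsupp : HasCompactSupport fun r : R2 => Real.sqrt (Φ r) :=
    hΦs.comp_left Real.sqrt_zero
  have hint : Integrable fun r : R2 => Real.sqrt (Φ r) :=
    hcont.integrable_of_hasCompactSupport hsupp
  set C : ℝ := ∫ r : R2, Real.sqrt (Φ r) with hCdef
  have hC0 : 0 ≤ C := integral_nonneg fun r => Real.sqrt_nonneg _
  have hC : ∫⁻ r : R2, ENNReal.ofReal (Real.sqrt (Φ r)) = ENNReal.ofReal C :=
    (ofReal_integral_eq_lintegral_ofReal hint
      (Filter.Eventually.of_forall fun r => Real.sqrt_nonneg _)).symm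
  obtain ⟨M, hM⟩ := hΦs.exists_bound_of_continuous hΦc.continuous
  have hM0 : 0 ≤ Real.sqrt M := Real.sqrt_nonneg _
  have hMb : ∀ r : R2, Real.sqrt (Φ r) ≤ Real.sqrt M := fun r =>
    Real.sqrt_le_sqrt ((le_abs_self _).trans (hM r))
  refine ⟨Real.sqrt M * C / (2 * π) + 1, by positivity, ?_⟩
  intro ε hε hε1 t ht g f hg hf
  set k : Yesp α × Yesp α' → ℝ≥0∞ := fun p =>
    ENNReal.ofReal (Real.sqrt (Φ p.1.1) * G n t (Sea α ε p.1 - Sea α' ε p.2) *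
      Real.sqrt (Φ p.2.1)) with hkdef
  have hsplit : ∀ p : Yesp α × Yesp α', k p =
      ENNReal.ofReal (Real.sqrt (Φ p.1.1)) *
        ENNReal.ofReal (G n t (Sea α ε p.1 - Sea α' ε p.2)) *
        ENNReal.ofReal (Real.sqrt (Φ p.2.1)) := by
    intro p
    simp only [hkdef]
    rw [ENNReal.ofReal_mul (mul_nonneg (Real.sqrt_nonneg _) (G_nonneg ht _)),
      ENNReal.ofReal_mul (Real.sqrt_nonneg _)]
  -- measurability
  have mG2 : Measurable fun p : Yesp α × Yesp α' => G n t (Sea α ε p.1 - Sea α' ε p.2) :=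
    (continuous_G ht).measurable.comp (measurable_pi_lambda _ fun i =>
      ((measurable_Sea_apply α ε i).comp measurable_fst).sub
        ((measurable_Sea_apply α' ε i).comp measurable_snd))
  have mk : Measurable k := by
    rw [hkdef]
    exact (((hΦm.comp (measurable_fst.comp measurable_fst)).mul mG2).mul
      (hΦm.comp (measurable_fst.comp measurable_snd))).ennreal_ofReal
  set A : ℝ≥0∞ := ENNReal.ofReal (Real.sqrt M) * ENNReal.ofReal ((2*π*t)⁻¹ * C) with hAdef
  -- row bound
  have row : ∀ y : Yesp α, ∫⁻ y' : Yesp α', k (y, y') ≤ A := by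
    intro y
    calc ∫⁻ y' : Yesp α', k (y, y')
        = ∫⁻ y' : Yesp α', ENNReal.ofReal (Real.sqrt (Φ y.1)) *
            (ENNReal.ofReal (Real.sqrt (Φ y'.1)) *
              ENNReal.ofReal (G n t (Sea α ε y - Sea α' ε y'))) := by
          apply lintegral_congr; intro y'; rw [hsplit]; ring
      _ = ENNReal.ofReal (Real.sqrt (Φ y.1)) * ∫⁻ y' : Yesp α',
            ENNReal.ofReal (Real.sqrt (Φ y'.1)) *
              ENNReal.ofReal (G n t (Sea α ε y - Sea α' ε y')) := by
          apply lintegral_const_mul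
          have mGy : Measurable fun y' : Yesp α' => G n t (Sea α ε y - Sea α' ε y') :=
            (continuous_G ht).measurable.comp (measurable_pi_lambda _ fun i =>
              measurable_const.sub (measurable_Sea_apply α' ε i))
          exact (hΦm.comp measurable_fst).ennreal_ofReal.mul mGy.ennreal_ofReal
      _ ≤ ENNReal.ofReal (Real.sqrt M) * ENNReal.ofReal ((2*π*t)⁻¹ * C) := by
          apply mul_le_mul' (ENNReal.ofReal_le_ofReal (hMb _))
          exact core_bound hΦm hC hC0 α' ε ht (Sea α ε y)
  -- column bound
  have col : ∀ y' : Yesp α', ∫⁻ y : Yesp α, k (y, y') ≤ A := by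
    intro y'
    have hGe : ∀ y : Yesp α, G n t (Sea α ε y - Sea α' ε y') =
        G n t (Sea α' ε y' - Sea α ε y) := fun y => by
      rw [← G_neg (t := t) (Sea α' ε y' - Sea α ε y), neg_sub]
    calc ∫⁻ y : Yesp α, k (y, y')
        = ∫⁻ y : Yesp α, ENNReal.ofReal (Real.sqrt (Φ y'.1)) *
            (ENNReal.ofReal (Real.sqrt (Φ y.1)) *
              ENNReal.ofReal (G n t (Sea α' ε y' - Sea α ε y))) := by
          apply lintegral_congr; intro y; rw [hsplit, hGe]; ring
      _ = ENNReal.ofReal (Real.sqrt (Φ y'.1)) * ∫⁻ y : Yesp α,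
            ENNReal.ofReal (Real.sqrt (Φ y.1)) *
              ENNReal.ofReal (G n t (Sea α' ε y' - Sea α ε y)) := by
          apply lintegral_const_mul
          have mG3 : Measurable fun y : Yesp α =>
              G n t (Sea α' ε y' - Sea α ε y) :=
            (continuous_G ht).measurable.comp (measurable_pi_lambda _ fun i =>
              measurable_const.sub (measurable_Sea_apply α ε i))
          exact (hΦm.comp measurable_fst).ennreal_ofReal.mul mG3.ennreal_ofReal
      _ ≤ ENNReal.ofReal (Real.sqrt M) * ENNReal.ofReal ((2*π*t)⁻¹ * C) := by
          apply mul_le_mul' (ENNReal.ofReal_le_ofReal (hMb _))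
          exact core_bound hΦm hC hC0 α ε ht (Sea α' ε y')
  -- Hölder
  have hsq : ∀ x : ℝ≥0∞, x ^ (1/2:ℝ) * x ^ (1/2:ℝ) = x := fun x => by
    rw [← ENNReal.rpow_add_of_nonneg _ _ (by norm_num) (by norm_num)]
    norm_num
  set F1 : Yesp α × Yesp α' → ℝ≥0∞ := fun p => g p.1 * k p ^ (1/2:ℝ) with hF1
  set F2 : Yesp α × Yesp α' → ℝ≥0∞ := fun p => k p ^ (1/2:ℝ) * f p.2 with hF2
  have mF1 : Measurable F1 := (hg.comp measurable_fst).mul (mk.pow measurable_const)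
  have mF2 : Measurable F2 := (mk.pow measurable_const).mul (hf.comp measurable_snd)
  have h22 : Real.HolderConjugate 2 2 := Real.HolderConjugate.two_two
  have holder := ENNReal.lintegral_mul_le_Lp_mul_Lq
    ((volume : Measure (Yesp α)).prod (volume : Measure (Yesp α'))) h22
    mF1.aemeasurable mF2.aemeasurable
  simp only [Pi.mul_apply] at holder
  have hF1sq : ∀ p : Yesp α × Yesp α', F1 p ^ (2:ℝ) = g p.1 ^ 2 * k p := by
    intro p
    rw [hF1]
    rw [ENNReal.mul_rpow_of_nonneg _ _ (by norm_num : (0:ℝ) ≤ 2), ← ENNReal.rpow_mul]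
    norm_num
  have hF2sq : ∀ p : Yesp α × Yesp α', F2 p ^ (2:ℝ) = k p * f p.2 ^ 2 := by
    intro p
    rw [hF2]
    rw [ENNReal.mul_rpow_of_nonneg _ _ (by norm_num : (0:ℝ) ≤ 2), ← ENNReal.rpow_mul]
    norm_num
  have I1 : ∫⁻ p : Yesp α × Yesp α', F1 p ^ (2:ℝ)
      ∂((volume : Measure (Yesp α)).prod volume) ≤ A * ∫⁻ y, g y ^ 2 := by
    simp_rw [hF1sq]
    have m1 : Measurable fun p : Yesp α × Yesp α' => g p.1 ^ 2 * k p :=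
      ((hg.comp measurable_fst).pow_const 2).mul mk
    rw [lintegral_prod _ m1.aemeasurable]
    calc ∫⁻ y, ∫⁻ y', g y ^ 2 * k (y, y')
        = ∫⁻ y, g y ^ 2 * ∫⁻ y', k (y, y') := by
          apply lintegral_congr; intro y
          exact lintegral_const_mul _ (mk.comp measurable_prodMk_left)
      _ ≤ ∫⁻ y, g y ^ 2 * A := lintegral_mono fun y => mul_le_mul_right (row y) _
      _ = A * ∫⁻ y, g y ^ 2 := by
          rw [lintegral_mul_const _ (hg.pow_const 2), mul_comm]
  have I2 : ∫⁻ p : Yesp α × Yesp α', F2 p ^ (2:ℝ)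
      ∂((volume : Measure (Yesp α)).prod volume) ≤ A * ∫⁻ y', f y' ^ 2 := by
    simp_rw [hF2sq]
    have m2 : Measurable fun p : Yesp α × Yesp α' => k p * f p.2 ^ 2 :=
      mk.mul ((hf.comp measurable_snd).pow_const 2)
    rw [lintegral_prod_symm _ m2.aemeasurable]
    calc ∫⁻ y', ∫⁻ y, k (y, y') * f y' ^ 2
        = ∫⁻ y', (∫⁻ y, k (y, y')) * f y' ^ 2 := by
          apply lintegral_congr; intro y'
          exact lintegral_mul_const _ (mk.comp measurable_prodMk_right)
      _ ≤ ∫⁻ y', A * f y' ^ 2 := lintegral_mono fun y' => mul_le_mul_left (col y') _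
      _ = A * ∫⁻ y', f y' ^ 2 := lintegral_const_mul _ (hf.pow_const 2)
  -- assemble
  have habxy : ∀ a x y : ℝ≥0∞, (a * x) ^ (1/2:ℝ) * (a * y) ^ (1/2:ℝ) =
      a * (x ^ (1/2:ℝ) * y ^ (1/2:ℝ)) := by
    intro a x y
    rw [ENNReal.mul_rpow_of_nonneg a x (by norm_num : (0:ℝ) ≤ 1/2),
      ENNReal.mul_rpow_of_nonneg a y (by norm_num : (0:ℝ) ≤ 1/2)]
    calc a ^ (1/2:ℝ) * x ^ (1/2:ℝ) * (a ^ (1/2:ℝ) * y ^ (1/2:ℝ))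
        = (a ^ (1/2:ℝ) * a ^ (1/2:ℝ)) * (x ^ (1/2:ℝ) * y ^ (1/2:ℝ)) := by ring
      _ = a * (x ^ (1/2:ℝ) * y ^ (1/2:ℝ)) := by rw [hsq]
  have hcA : A ≤ ENNReal.ofReal ((Real.sqrt M * C / (2 * π) + 1) / t) := by
    rw [hAdef, ← ENNReal.ofReal_mul hM0]
    apply ENNReal.ofReal_le_ofReal
    rw [show Real.sqrt M * ((2*π*t)⁻¹ * C) = (Real.sqrt M * C / (2*π)) / t by
      field_simp]
    exact (div_le_div_iff_of_pos_right ht).2 (by linarith)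
  calc (∫⁻ y, ∫⁻ y', g y * ENNReal.ofReal
          (Real.sqrt (Φ y.1) * G n t (Sea α ε y - Sea α' ε y') * Real.sqrt (Φ y'.1)) * f y')
      = ∫⁻ p : Yesp α × Yesp α', g p.1 * k p * f p.2
          ∂((volume : Measure (Yesp α)).prod volume) := by
        have m0 : Measurable fun p : Yesp α × Yesp α' => g p.1 * k p * f p.2 :=
          ((hg.comp measurable_fst).mul mk).mul (hf.comp measurable_snd)
        rw [lintegral_prod _ m0.aemeasurable]
    _ = ∫⁻ p : Yesp α × Yesp α', F1 p * F2 p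
          ∂((volume : Measure (Yesp α)).prod volume) := by
        apply lintegral_congr; intro p
        rw [hF1, hF2]
        simp only
        calc g p.1 * k p * f p.2 = g p.1 * (k p ^ (1/2:ℝ) * k p ^ (1/2:ℝ)) * f p.2 := by
              rw [hsq]
          _ = g p.1 * k p ^ (1/2:ℝ) * (k p ^ (1/2:ℝ) * f p.2) := by ring
    _ ≤ (∫⁻ p, F1 p ^ (2:ℝ) ∂((volume : Measure (Yesp α)).prod volume)) ^ (1/2:ℝ) *
        (∫⁻ p, F2 p ^ (2:ℝ) ∂((volume : Measure (Yesp α)).prod volume)) ^ (1/2:ℝ) := holder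
    _ ≤ (A * ∫⁻ y, g y ^ 2) ^ (1/2:ℝ) * (A * ∫⁻ y', f y' ^ 2) ^ (1/2:ℝ) :=
        mul_le_mul' (ENNReal.rpow_le_rpow I1 (by norm_num))
          (ENNReal.rpow_le_rpow I2 (by norm_num))
    _ = A * ((∫⁻ y, g y ^ 2) ^ (1/2:ℝ) * (∫⁻ y', f y' ^ 2) ^ (1/2:ℝ)) := habxy A _ _
    _ ≤ ENNReal.ofReal ((Real.sqrt M * C / (2 * π) + 1) / t) *
          ((∫⁻ y, g y ^ 2) ^ (1/2:ℝ) * (∫⁻ y', f y' ^ 2) ^ (1/2:ℝ)) :=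
        mul_le_mul_left hcA _
    _ = ENNReal.ofReal ((Real.sqrt M * C / (2 * π) + 1) / t) *
          (∫⁻ y, g y ^ 2) ^ (1/2:ℝ) * (∫⁻ y', f y' ^ 2) ^ (1/2:ℝ) := by ring
end
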